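/- Let d ∈ ℕ, 1 ≤ p < ∞ and α, β > 0. Then inf{ E_{p;α,β}(T) : T a d-simplex in ℝ^d with |T| = 1 } > 0. -/

import Mathlib

/-!
Write `f = Q - u = ‖x‖² - (⟪a, x⟫ + c)`. Since the Hessian of `f` is `2`, the value of `f` at the
midpoint of `z` and `x` is the mean of `f z` and `f x` minus `‖x - z‖² / 4`; so if `|f| < ε` at two
points at distance at least `√(8ε)`, then `f < -ε` at their midpoint. For a convex body `T` and a
point `z` of the shell `S = T ∩ {|f| < ε}`, the homothety of ratio `1/2` about `z` therefore maps
`S` minus a small ball around `z` into `T \ S`, whence `|S| ≤ 2^d |T \ S| + |ball|`. Choosing `ε`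
so that these balls have volume at most `1/2`, every convex body of volume one has
`|T \ S| ≥ 1 / (2 (2^d + 1))`, uniformly in `a` and `c`, and on `T \ S` the asymmetric error
density is at least `min α β · ε`.
-/

open MeasureTheory Metric Set

/-- The asymmetric `L_p`-error of best approximation of `Q(x) = ∑ xⱼ²` by affine
functions `x ↦ ⟪a, x⟫ + c` on the set `T ⊆ ℝ^d`. -/
noncomputable def Epab (d : ℕ) (p α β : ℝ) (T : Set (EuclideanSpace ℝ (Fin d))) : ℝ :=
  ⨅ (a : EuclideanSpace ℝ (Fin d)) (c : ℝ),
    (∫ x in T,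
      (α * max ((∑ j, x j ^ 2) - ((inner ℝ a x : ℝ) + c)) 0 +
        β * max (-((∑ j, x j ^ 2) - ((inner ℝ a x : ℝ) + c))) 0) ^ p) ^ (1 / p)

open Module (finrank)

theorem min_mul_abs_le (α β t : ℝ) : min α β * |t| ≤ α * max t 0 + β * max (-t) 0 := by
  rcases le_total 0 t with ht | ht
  · rw [abs_of_nonneg ht, max_eq_left ht, max_eq_right (neg_nonpos.mpr ht)]
    nlinarith [min_le_left α β]
  · rw [abs_of_nonpos ht, max_eq_right ht, max_eq_left (neg_nonneg.mpr ht)]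
    nlinarith [min_le_right α β]

theorem mul_measureReal_le_setIntegral_rpow {X : Type*} [TopologicalSpace X] [T2Space X]
    [MeasurableSpace X] [OpensMeasurableSpace X] {μ : Measure X} [IsFiniteMeasureOnCompacts μ]
    {f : X → ℝ} (hf : Continuous f) {T : Set X} (hT : IsCompact T) {p α β ε : ℝ} (hp : 0 ≤ p)
    (hα : 0 ≤ α) (hβ : 0 ≤ β) (hε : 0 ≤ ε) :
    (min α β * ε) ^ p * μ.real (T \ {x | |f x| < ε}) ≤
      ∫ x in T, (α * max (f x) 0 + β * max (-f x) 0) ^ p ∂μ := by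
  set g : X → ℝ := fun x ↦ α * max (f x) 0 + β * max (-f x) 0
  have hint : IntegrableOn (fun x ↦ g x ^ p) T μ :=
    ((by fun_prop : Continuous g).rpow_const fun _ ↦ Or.inr hp).continuousOn.integrableOn_compact hT
  have hA : MeasurableSet (T \ {x | |f x| < ε}) :=
    hT.measurableSet.diff (isOpen_lt hf.abs continuous_const).measurableSet
  have hlow : ∀ x ∈ T \ {x | |f x| < ε}, (min α β * ε) ^ p ≤ g x ^ p := fun x hx ↦
    Real.rpow_le_rpow (by positivity)
      ((mul_le_mul_of_nonneg_left (not_lt.mp hx.2) (le_min hα hβ)).trans (min_mul_abs_le α β _)) hp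
  calc (min α β * ε) ^ p * μ.real (T \ {x | |f x| < ε})
      ≤ ∫ x in T \ {x | |f x| < ε}, g x ^ p ∂μ :=
        setIntegral_ge_of_const_le_real hA ((measure_mono sdiff_subset).trans_lt hT.measure_lt_top).ne
          hlow (hint.mono_set sdiff_subset)
    _ ≤ ∫ x in T, g x ^ p ∂μ :=
        setIntegral_mono_set hint (.of_forall fun x ↦ Real.rpow_nonneg (by positivity) p)
          sdiff_subset.eventuallyLE

section HaarMeasure

variable {E : Type*} [NormedAddCommGroup E] [NormedSpace ℝ E] [FiniteDimensional ℝ E]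
  [MeasurableSpace E] [BorelSpace E] (μ : Measure E) [μ.IsAddHaarMeasure]

theorem exists_pos_addHaar_ball_lt [Nontrivial E] {c : ENNReal} (hc : 0 < c) :
    ∃ ρ > 0, μ (ball (0 : E) ρ) < c := by
  have hlim := tendsto_measure_cthickening_of_isCompact (μ := μ) (isCompact_singleton (x := (0 : E)))
  rw [measure_singleton] at hlim
  obtain ⟨ρ, hρc, hρ⟩ := ((hlim.eventually (gt_mem_nhds hc)).filter_mono nhdsWithin_le_nhds
    |>.and (self_mem_nhdsWithin (s := Ioi (0 : ℝ)))).exists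
  exact ⟨ρ, hρ, (measure_mono (ball_subset_closedBall.trans
    (closedBall_subset_cthickening_singleton 0 ρ))).trans_lt hρc⟩

theorem exists_addHaar_image_homothety_eq_one [Nontrivial E] {K : Set E} (h0 : μ K ≠ 0)
    (htop : μ K ≠ ⊤) (x : E) : ∃ s : ℝ, s ≠ 0 ∧ μ (AffineMap.homothety x s '' K) = 1 := by
  have hn : (finrank ℝ E : ℝ) ≠ 0 := by exact_mod_cast Module.finrank_pos.ne'
  have hK : 0 < (μ K).toReal := ENNReal.toReal_pos h0 htop
  refine ⟨(μ K).toReal ^ (-(finrank ℝ E : ℝ)⁻¹), (Real.rpow_pos_of_pos hK _).ne', ?_⟩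
  rw [Measure.addHaar_image_homothety, abs_pow, ← Real.rpow_natCast, abs_of_nonneg (by positivity),
    ← Real.rpow_mul hK.le, neg_mul, inv_mul_cancel₀ hn, Real.rpow_neg_one,
    ENNReal.ofReal_inv_of_pos hK, ENNReal.ofReal_toReal htop, ENNReal.inv_mul_cancel h0 htop]

theorem exists_affineIndependent_addHaar_convexHull_eq_one [Nontrivial E] {ι : Type*} [Fintype ι]
    (hι : Fintype.card ι = finrank ℝ E + 1) :
    ∃ w : ι → E, AffineIndependent ℝ w ∧ μ (convexHull ℝ (range w)) = 1 := by
  obtain ⟨b⟩ := AffineBasis.exists_affineBasis_of_finiteDimensional (k := ℝ) (P := E) hι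
  obtain ⟨s, hs, hs1⟩ := exists_addHaar_image_homothety_eq_one μ
    (Measure.measure_pos_of_nonempty_interior μ ⟨_, b.centroid_mem_interior_convexHull⟩).ne'
    ((finite_range b).isCompact_convexHull ℝ).measure_lt_top.ne 0
  refine ⟨AffineMap.homothety 0 s ∘ b, b.ind.map' _ (AffineMap.homothety_injective 0 hs), ?_⟩
  rwa [range_comp, ← AffineMap.image_convexHull]

theorem measure_le_two_pow_mul_measure_diff_add_ball {T S : Set E} {z : E} {ρ : ℝ}
    (hT : Convex ℝ T) (hz : z ∈ T) (hST : S ⊆ T)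
    (hmid : ∀ x ∈ S \ ball z ρ, AffineMap.homothety z (2⁻¹ : ℝ) x ∉ S) :
    μ S ≤ 2 ^ finrank ℝ E * μ (T \ S) + μ (ball z ρ) := by
  have hmaps : AffineMap.homothety z (2⁻¹ : ℝ) '' (S \ ball z ρ) ⊆ T \ S := by
    rintro _ ⟨x, hx, rfl⟩
    refine ⟨?_, hmid x hx⟩
    rw [AffineMap.homothety_eq_lineMap]
    exact hT.lineMap_mem hz (hST hx.1) ⟨by norm_num, by norm_num⟩
  have hscale : μ (S \ ball z ρ) =
      2 ^ finrank ℝ E * μ (AffineMap.homothety z (2⁻¹ : ℝ) '' (S \ ball z ρ)) := by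
    rw [Measure.addHaar_image_homothety, ← mul_assoc, abs_of_nonneg (by positivity), inv_pow,
      ENNReal.ofReal_inv_of_pos (by positivity), ENNReal.ofReal_pow zero_le_two,
      ENNReal.ofReal_ofNat, ENNReal.mul_inv_cancel (by simp) (by simp), one_mul]
  calc μ S ≤ μ (S \ ball z ρ) + μ (ball z ρ) :=
        (measure_mono (subset_sdiff_union _ _)).trans (measure_union_le _ _)
    _ ≤ 2 ^ finrank ℝ E * μ (T \ S) + μ (ball z ρ) := by grw [hscale, hmaps]

end HaarMeasure

section SqNormSubAffine

variable {E : Type*} [NormedAddCommGroup E] [InnerProductSpace ℝ E]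

noncomputable def sqNormSubAffine (a : E) (c : ℝ) (x : E) : ℝ :=
  ‖x‖ ^ 2 - (inner ℝ a x + c)

theorem continuous_sqNormSubAffine (a : E) (c : ℝ) : Continuous (sqNormSubAffine a c) := by
  unfold sqNormSubAffine; fun_prop

theorem sqNormSubAffine_homothety_half (a : E) (c : ℝ) (z x : E) :
    sqNormSubAffine a c (AffineMap.homothety z (2⁻¹ : ℝ) x) =
      (sqNormSubAffine a c z + sqNormSubAffine a c x) / 2 - ‖x - z‖ ^ 2 / 4 := by
  simp only [sqNormSubAffine, AffineMap.homothety_apply, vsub_eq_sub, vadd_eq_add,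
    ← real_inner_self_eq_norm_sq, inner_add_left, inner_add_right, inner_sub_left, inner_sub_right,
    real_inner_smul_left, real_inner_smul_right, real_inner_comm z x]
  ring

theorem sqNormSubAffine_homothety_half_lt {a : E} {c ε : ℝ} {z x : E}
    (hz : |sqNormSubAffine a c z| < ε) (hx : |sqNormSubAffine a c x| < ε)
    (hxz : 8 * ε ≤ ‖x - z‖ ^ 2) :
    sqNormSubAffine a c (AffineMap.homothety z (2⁻¹ : ℝ) x) < -ε := by
  rw [sqNormSubAffine_homothety_half]
  linarith [(abs_lt.mp hz).2, (abs_lt.mp hx).2]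

variable [FiniteDimensional ℝ E] [MeasurableSpace E] [BorelSpace E] (μ : Measure E)
  [μ.IsAddHaarMeasure]

theorem inv_two_le_mul_measure_diff_abs_sqNormSubAffine_lt {T : Set E} (hT : Convex ℝ T)
    (hT1 : μ T = 1) {ε : ℝ} (hball : μ (ball 0 √(8 * ε)) ≤ 2⁻¹) (a : E) (c : ℝ) :
    2⁻¹ ≤ (2 ^ finrank ℝ E + 1) * μ (T \ {x | |sqNormSubAffine a c x| < ε}) := by
  set f := sqNormSubAffine a c
  set S := T ∩ {x | |f x| < ε}
  have hS : μ S ≤ 2 ^ finrank ℝ E * μ (T \ S) + 2⁻¹ := by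
    rcases S.eq_empty_or_nonempty with hS | ⟨z, hzT, hz⟩
    · simp [hS]
    calc μ S ≤ 2 ^ finrank ℝ E * μ (T \ S) + μ (ball z √(8 * ε)) := by
          refine measure_le_two_pow_mul_measure_diff_add_ball μ hT hzT inter_subset_left ?_
          rintro x ⟨⟨-, hx⟩, hxz⟩ ⟨-, hmid⟩
          have hε : 0 ≤ 8 * ε := by linarith [abs_nonneg (f z), hz.out]
          have hxz : 8 * ε ≤ ‖x - z‖ ^ 2 := by
            rw [← Real.sq_sqrt hε, ← dist_eq_norm]
            exact pow_le_pow_left₀ (Real.sqrt_nonneg _) (not_lt.mp hxz) 2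
          exact (neg_abs_le _).not_gt ((sqNormSubAffine_homothety_half_lt hz hx hxz).trans
            (neg_lt_neg hmid))
      _ ≤ 2 ^ finrank ℝ E * μ (T \ S) + 2⁻¹ := by rw [Measure.addHaar_ball_center]; gcongr
  have hTS : T \ S = T \ {x | |f x| < ε} := sdiff_self_inter
  have hsplit : μ S + μ (T \ S) = 1 := by
    rw [hTS, ← hT1]
    exact measure_inter_add_sdiff T
      (isOpen_lt (continuous_sqNormSubAffine a c).abs continuous_const).measurableSet
  rw [← hTS, ← ENNReal.one_sub_inv_two, tsub_le_iff_right]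
  calc 1 = μ S + μ (T \ S) := hsplit.symm
    _ ≤ 2 ^ finrank ℝ E * μ (T \ S) + 2⁻¹ + μ (T \ S) := by gcongr
    _ = _ := by ring

end SqNormSubAffine

theorem exists_pos_le_Epab {d : ℕ} (hd : 0 < d) {p α β : ℝ} (hp : 0 < p) (hα : 0 < α)
    (hβ : 0 < β) :
    ∃ C > 0, ∀ T : Set (EuclideanSpace ℝ (Fin d)), IsCompact T → Convex ℝ T → volume T = 1 →
      C ≤ Epab d p α β T := by
  have : Nonempty (Fin d) := ⟨⟨0, hd⟩⟩
  obtain ⟨ρ, hρ, hball⟩ := exists_pos_addHaar_ball_lt (volume : Measure (EuclideanSpace ℝ (Fin d)))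
    (c := 2⁻¹) (by norm_num)
  set ε := ρ ^ 2 / 8
  have hρε : √(8 * ε) = ρ := by rw [mul_div_cancel₀ _ (by norm_num), Real.sqrt_sq hρ.le]
  refine ⟨((min α β * ε) ^ p * (2 * (2 ^ d + 1))⁻¹) ^ (1 / p), by positivity,
    fun T hTc hT hT1 ↦ le_ciInf fun a ↦ le_ciInf fun c ↦ ?_⟩
  have hQ (x : EuclideanSpace ℝ (Fin d)) :
      ∑ j, x j ^ 2 - (inner ℝ a x + c) = sqNormSubAffine a c x := by
    simp [sqNormSubAffine, EuclideanSpace.norm_sq_eq]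
  have hshell := inv_two_le_mul_measure_diff_abs_sqNormSubAffine_lt volume hT hT1
    (ε := ε) (hρε ▸ hball.le) a c
  rw [finrank_euclideanSpace_fin] at hshell
  simp only [hQ]
  gcongr
  have hfin : volume (T \ {x | |sqNormSubAffine a c x| < ε}) ≠ ⊤ :=
    ((measure_mono sdiff_subset).trans_lt (hT1 ▸ ENNReal.one_lt_top)).ne
  calc (min α β * ε) ^ p * (2 * (2 ^ d + 1))⁻¹
      ≤ (min α β * ε) ^ p * volume.real (T \ {x | |sqNormSubAffine a c x| < ε}) := by
        gcongr
        rw [mul_inv_rev, inv_mul_le_iff₀ (by positivity)]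
        simpa [measureReal_def, ENNReal.toReal_add, ENNReal.toReal_pow] using
          ENNReal.toReal_mono (ENNReal.mul_ne_top (by simp) hfin) hshell
    _ ≤ _ := mul_measureReal_le_setIntegral_rpow (continuous_sqNormSubAffine a c) hTc hp.le hα.le
        hβ.le (by positivity)

/-- The infimum over unit-volume `d`-simplices of the asymmetric `L_p`-error of best
affine approximation of `Q` is strictly positive. -/
theorem optimal_error_positive
    (d : ℕ) (hd : 0 < d) (p α β : ℝ) (hp : 1 ≤ p) (hα : 0 < α) (hβ : 0 < β) :
    0 < sInf {r : ℝ | ∃ w : Fin (d + 1) → EuclideanSpace ℝ (Fin d),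
      AffineIndependent ℝ w ∧
      volume (convexHull ℝ (Set.range w)) = 1 ∧
      r = Epab d p α β (convexHull ℝ (Set.range w))} := by
  obtain ⟨C, hC, hCle⟩ := exists_pos_le_Epab hd (zero_lt_one.trans_le hp) hα hβ
  have : Nonempty (Fin d) := ⟨⟨0, hd⟩⟩
  obtain ⟨w, hw, hw1⟩ := exists_affineIndependent_addHaar_convexHull_eq_one
    (volume : Measure (EuclideanSpace ℝ (Fin d))) (ι := Fin (d + 1)) (by simp)
  refine hC.trans_le (le_csInf ⟨_, w, hw, hw1, rfl⟩ ?_)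
  rintro _ ⟨w, -, hw1, rfl⟩
  exact hCle _ ((finite_range w).isCompact_convexHull ℝ) (convex_convexHull ℝ _) hw1
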